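/- Let D be a digraph obtained from a tournament by deleting the edges of a single star. Then D has a vertex with the second neighborhood property. -/

import Mathlib

/-! Median orders (Havet–Thomassé). Among the orderings of the vertices with the most forward
arcs, take one in which the centre `x` comes as late as possible, and let `f` be its last vertex.
In such an order every vertex has at least as many in- as out-neighbours among its predecessors.
For `f` this compares `N⁺(f)` with its in-neighbours, which lie in `N⁺⁺(f)` unless they are far
from `f` (at distance at least three). If the earliest far vertex `u ≠ x` ties that comparison,
it can be moved to the front and the argument repeated without it. Otherwise `u` has more in- than
out-neighbours before it; there its in-neighbours lie in `N⁺⁺(f)` and it beats every out-neighbour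
of `f` except possibly `x`, so the SNP inequality holds on the prefix before `u`, and the order
after `u` is handled inductively. Non-adjacency only enters through `x`, and wherever `x` would
cost a unit there is a median order that puts `x` later, contradicting its choice. -/

variable {V : Type*}

/-- Out-neighborhood of `v`. -/
def Nplus (A : V → V → Prop) (v : V) : Set V := {u | A v u}

/-- In-neighborhood of `v`. -/
def Nminus (A : V → V → Prop) (v : V) : Set V := {u | A u v}

/-- Second out-neighborhood: vertices at directed distance exactly 2 from `v`. -/
def Npp (A : V → V → Prop) (v : V) : Set V :=
  {u | u ≠ v ∧ ¬ A v u ∧ ∃ w, A v w ∧ A w u}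

/-- The second neighborhood property. -/
def SNP (A : V → V → Prop) (v : V) : Prop := (Nplus A v).ncard ≤ (Npp A v).ncard

/-- A digraph (given by its arc relation) has no digons: no 2-cycles (this also rules out loops when stated for `u = v`). -/
def NoDigons (A : V → V → Prop) : Prop := ∀ u v, ¬ (A u v ∧ A v u)

/-- A tournament: an orientation of a complete graph. -/
def IsTournament (A : V → V → Prop) : Prop :=
  (∀ v, ¬ A v v) ∧ ∀ u v : V, u ≠ v → (A u v ↔ ¬ A v u)

/-- `u v` is a missing edge: distinct and non-adjacent. -/
def MissingEdge (A : V → V → Prop) (u v : V) : Prop := u ≠ v ∧ ¬ A u v ∧ ¬ A v u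

/-- `x₁y₁` loses to `x₂y₂` (with this labelling of endpoints). -/
def LosesAt (A : V → V → Prop) (x₁ y₁ x₂ y₂ : V) : Prop :=
  A x₁ x₂ ∧ ¬ A x₁ y₂ ∧ y₂ ∉ Npp A x₁ ∧ A y₁ y₂ ∧ ¬ A y₁ x₂ ∧ x₂ ∉ Npp A y₁

/-- The losing relation between (unordered) missing edges: the arcs of the dependency digraph. -/
def EdgeLoses (A : V → V → Prop) (e e' : Sym2 V) : Prop :=
  ∃ x₁ y₁ x₂ y₂, e = s(x₁, y₁) ∧ e' = s(x₂, y₂) ∧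
    MissingEdge A x₁ y₁ ∧ MissingEdge A x₂ y₂ ∧ LosesAt A x₁ y₁ x₂ y₂

open scoped Classical

noncomputable def forwardArcs (A : V → V → Prop) : List V → ℕ
  | [] => 0
  | a :: t => t.countP (A a ·) + forwardArcs A t

noncomputable def crossArcs (A : V → V → Prop) (l₁ l₂ : List V) : ℕ :=
  (l₁.map fun a => l₂.countP (A a ·)).sum

def IsMedian (A : V → V → Prop) (l : List V) : Prop :=
  ∀ l', l'.Perm l → forwardArcs A l' ≤ forwardArcs A l

def FarFrom (A : V → V → Prop) (f w : V) : Prop := w ≠ f ∧ ¬ A f w ∧ w ∉ Npp A f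

def ExistsLaterMedian (A : V → V → Prop) (c : V) (l : List V) : Prop :=
  ∃ l', l'.Perm l ∧ IsMedian A l' ∧ l.idxOf c < l'.idxOf c

/-- The SNP of the last vertex `f` of `p ++ [f]`, counted inside `p`, or a later place for `c`. -/
def FeedDichotomy (A : V → V → Prop) (c f : V) (p : List V) : Prop :=
  p.countP (A f ·) ≤ p.countP (· ∈ Npp A f) ∨ ExistsLaterMedian A c (p ++ [f])

theorem List.idxOf_append_cons_le (c u : V) (p s : List V) :
    (p ++ u :: s).idxOf c ≤ (p ++ s).idxOf c + 1 := by
  grind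

theorem ncard_setOf_eq_countP {P : V → Prop} {l : List V} (hl : l.Nodup)
    (hP : ∀ v, P v → v ∈ l) : {v | P v}.ncard = l.countP (P ·) := by
  have : {v | P v} = ((l.filter (P ·)).toFinset : Set V) := by
    ext v
    simpa using hP v
  rw [this, Set.ncard_coe_finset, List.toFinset_card_of_nodup (hl.filter _),
    List.countP_eq_length_filter]

/-- The strict inequality pays for the single vertex `c`, which `hIn` and `hOut` exempt. -/
theorem countP_le_countP_of_lt {O G In Out : V → Prop} {c : V} {q : List V} (hq : q.Nodup)
    (hIn : ∀ w ∈ q, In w → G w ∨ (w = c ∧ ¬ O w)) (hOut : ∀ w ∈ q, O w → w ≠ c → Out w)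
    (hlt : q.countP (Out ·) < q.countP (In ·)) : q.countP (O ·) ≤ q.countP (G ·) := by
  have away : ∀ r : List V, c ∉ r → (∀ w ∈ r, w ∈ q) →
      r.countP (O ·) ≤ r.countP (Out ·) ∧ r.countP (In ·) ≤ r.countP (G ·) := by
    refine fun r hcr hrq => ⟨List.countP_mono_left fun w hw hO => ?_,
      List.countP_mono_left fun w hw hI => ?_⟩
    · simpa using hOut w (hrq w hw) (by simpa using hO) (ne_of_mem_of_not_mem hw hcr)
    · rcases hIn w (hrq w hw) (by simpa using hI) with hG | ⟨rfl, -⟩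
      · simpa using hG
      · exact absurd hw hcr
  by_cases hc : c ∈ q
  · have hperm := List.perm_cons_erase hc
    obtain ⟨hO, hI⟩ := away _ hq.not_mem_erase fun w hw => List.mem_of_mem_erase hw
    have hcG : In c → O c → G c := fun hI hO => (hIn c hc hI).resolve_right fun h => h.2 hO
    have hcount :
        (if O c then 1 else 0) + (if In c then 1 else 0) ≤ (if G c then 1 else 0) + 1 := by
      split_ifs <;> simp_all
    simp only [List.Perm.countP_eq _ hperm, List.countP_cons, decide_eq_true_eq] at hlt ⊢
    omega
  · obtain ⟨hO, hI⟩ := away q hc fun _ => id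
    omega

section Median

variable {A : V → V → Prop}

theorem forwardArcs_append (l₁ l₂ : List V) :
    forwardArcs A (l₁ ++ l₂) = forwardArcs A l₁ + crossArcs A l₁ l₂ + forwardArcs A l₂ := by
  induction l₁ with
  | nil => simp [forwardArcs, crossArcs]
  | cons a t ih =>
    simp only [List.cons_append, forwardArcs, List.countP_append, ih]
    simp only [crossArcs, List.map_cons, List.sum_cons]
    omega

theorem crossArcs_cons_right (l₁ : List V) (u : V) (l₂ : List V) :
    crossArcs A l₁ (u :: l₂) = l₁.countP (A · u) + crossArcs A l₁ l₂ := by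
  induction l₁ with
  | nil => simp [crossArcs]
  | cons a t ih =>
    simp only [crossArcs, List.map_cons, List.sum_cons, List.countP_cons] at ih ⊢
    omega

theorem crossArcs_perm_right (l₁ : List V) {l₂ l₂' : List V} (h : l₂.Perm l₂') :
    crossArcs A l₁ l₂ = crossArcs A l₁ l₂' := by
  simp only [crossArcs, h.countP_eq]

theorem forwardArcs_append_cons_add (p : List V) (u : V) (s : List V) :
    forwardArcs A (p ++ u :: s) + p.countP (A u ·) =
      forwardArcs A (u :: (p ++ s)) + p.countP (A · u) := by
  simp only [forwardArcs_append, crossArcs_cons_right, forwardArcs, List.countP_append]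
  omega

theorem IsMedian.of_append_right {q s : List V} (h : IsMedian A (q ++ s)) : IsMedian A s := by
  intro s' hs'
  have := h (q ++ s') (hs'.append_left q)
  rw [forwardArcs_append, forwardArcs_append, crossArcs_perm_right q hs'] at this
  omega

theorem IsMedian.countP_out_le_countP_in {p s : List V} {u : V} (h : IsMedian A (p ++ u :: s)) :
    p.countP (A u ·) ≤ p.countP (A · u) := by
  have := h (u :: (p ++ s)) List.perm_middle.symm
  have := forwardArcs_append_cons_add (A := A) p u s
  omega

theorem IsMedian.cons_append {p s : List V} {u : V} (h : IsMedian A (p ++ u :: s))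
    (he : p.countP (A u ·) = p.countP (A · u)) : IsMedian A (u :: (p ++ s)) := by
  intro l hl
  have := h l (hl.trans List.perm_middle.symm)
  have := forwardArcs_append_cons_add (A := A) p u s
  omega

theorem IsMedian.append_of_perm {q s s' : List V} (h : IsMedian A (q ++ s)) (hs : s'.Perm s)
    (h' : IsMedian A s') : IsMedian A (q ++ s') := by
  have hfwd : forwardArcs A (q ++ s') = forwardArcs A (q ++ s) := by
    rw [forwardArcs_append, forwardArcs_append, crossArcs_perm_right q hs,
      le_antisymm (h.of_append_right s' hs) (h' s hs.symm)]
  intro l hl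
  rw [hfwd]
  exact h l (hl.trans (hs.append_left q))

variable (A) in
theorem exists_isMedian_forall_idxOf_le (l : List V) (c : V) :
    ∃ m, m.Perm l ∧ IsMedian A m ∧ ∀ m', m'.Perm l → IsMedian A m' → m'.idxOf c ≤ m.idxOf c := by
  obtain ⟨m₀, hm₀, hmax₀⟩ :=
    l.permutations.toFinset.exists_max_image (forwardArcs A) ⟨l, by simp⟩
  have hmed₀ : IsMedian A m₀ := fun l' hl' =>
    hmax₀ l' (by simpa using hl'.trans (by simpa using hm₀))
  obtain ⟨m, hm, hmax⟩ := (l.permutations.toFinset.filter (IsMedian A)).exists_max_image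
    (List.idxOf c) ⟨m₀, by simpa [hmed₀] using hm₀⟩
  simp only [Finset.mem_filter, List.mem_toFinset, List.mem_permutations] at hm hmax
  exact ⟨m, hm.1, hm.2, fun m' hm' hmed' => hmax m' ⟨hm', hmed'⟩⟩

end Median

section Dichotomy

variable {A : V → V → Prop} {c f : V}

theorem snp_of_countP_le (hA : NoDigons A) {p : List V} (hnd : (p ++ [f]).Nodup)
    (hall : ∀ v, v ∈ p ++ [f]) (h : p.countP (A f ·) ≤ p.countP (· ∈ Npp A f)) : SNP A f := by
  have hmem : ∀ v, v ≠ f → v ∈ p := fun v hv => by simpa [hv] using hall v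
  have hout : (Nplus A f).ncard = p.countP (A f ·) :=
    ncard_setOf_eq_countP hnd.of_append_left fun v hv => hmem v fun h => hA f f ⟨h ▸ hv, h ▸ hv⟩
  have hnpp : (Npp A f).ncard = p.countP (· ∈ Npp A f) :=
    ncard_setOf_eq_countP (P := (· ∈ Npp A f)) hnd.of_append_left fun v hv => hmem v hv.1
  rwa [SNP, hout, hnpp]

theorem feedDichotomy_of_forall_farFrom_eq (hA : NoDigons A) {p : List V}
    (hnd : (p ++ [f]).Nodup) (hmed : IsMedian A (p ++ [f]))
    (hfar : ∀ w ∈ p, FarFrom A f w → w = c) : FeedDichotomy A c f p := by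
  have hfp : f ∉ p := fun h => List.disjoint_of_nodup_append hnd h (List.mem_singleton_self f)
  have hin : ∀ w ∈ p, A w f → w ∈ Npp A f ∨ (w = c ∧ ¬ A f w) := by
    intro w hw hwf
    have hfw : ¬ A f w := fun h => hA w f ⟨hwf, h⟩
    by_cases hnpp : w ∈ Npp A f
    · exact .inl hnpp
    · exact .inr ⟨hfar w hw ⟨ne_of_mem_of_not_mem hw hfp, hfw, hnpp⟩, hfw⟩
  rcases (hmed.countP_out_le_countP_in (s := [])).lt_or_eq with hlt | htight
  · exact .inl (countP_le_countP_of_lt hnd.of_append_left hin (fun _ _ h _ => h) hlt)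
  by_cases hc : c ∈ p ∧ FarFrom A f c
  · refine .inr ⟨f :: p, (List.perm_append_singleton f p).symm,
      by simpa using hmed.cons_append htight, ?_⟩
    rw [List.idxOf_append_of_mem hc.1, List.idxOf_cons_ne _ hc.2.1.symm]
    omega
  · refine .inl (htight.le.trans (List.countP_mono_left fun w hw hwf => ?_))
    rcases hin w hw (by simpa using hwf) with h | ⟨rfl, hfw⟩
    · simpa using h
    · by_contra hnpp
      exact hc ⟨hw, ne_of_mem_of_not_mem hw hfp, hfw, by simpa using hnpp⟩

/-- An in-neighbour `w` of `u` is no out-neighbour of `f`, else `f → w → u` puts `u` in `N⁺⁺(f)`. -/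
theorem countP_le_countP_npp_of_farFrom (hstar : ∀ u v, MissingEdge A u v → u = c ∨ v = c)
    {p : List V} {u : V} (hp : p.Nodup) (hu : FarFrom A f u) (huc : u ≠ c)
    (hfirst : ∀ w ∈ p, FarFrom A f w → w = c) (hlt : p.countP (A u ·) < p.countP (A · u)) :
    p.countP (A f ·) ≤ p.countP (· ∈ Npp A f) := by
  have hin : ∀ w, A w u → ¬ A f w := fun w hwu hfw => hu.2.2 ⟨hu.1, hu.2.1, w, hfw, hwu⟩
  refine countP_le_countP_of_lt (c := c) hp (fun w hw hwu => ?_) (fun w _ hfw hwc => ?_) hlt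
  · by_cases hnpp : w ∈ Npp A f
    · exact .inl hnpp
    · have hwf : w ≠ f := by rintro rfl; exact hu.2.1 hwu
      exact .inr ⟨hfirst w hw ⟨hwf, hin w hwu, hnpp⟩, hin w hwu⟩
  · by_contra huw
    have hne : u ≠ w := by rintro rfl; exact hu.2.1 hfw
    rcases hstar u w ⟨hne, huw, fun hwu => hin w hwu hfw⟩ with h | h
    exacts [huc h, hwc h]

theorem FeedDichotomy.insert_middle {u : V} {p₁ p₂ : List V} (h : FeedDichotomy A c f (p₁ ++ p₂))
    (hu : ¬ A f u) (huc : u ≠ c) (hmed : IsMedian A (u :: (p₁ ++ (p₂ ++ [f])))) :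
    FeedDichotomy A c f (p₁ ++ u :: p₂) := by
  rcases h with h | ⟨l, hl, hmedl, hlt⟩
  · left
    simp only [List.countP_append, List.countP_cons, hu, decide_false, Bool.false_eq_true,
      if_false] at h ⊢
    split_ifs <;> omega
  · refine .inr ⟨u :: l, ?_, ?_, ?_⟩
    · simpa using (hl.cons u).trans (by simpa using List.perm_middle.symm)
    · simpa using hmed.append_of_perm (q := [u]) (by simpa using hl) hmedl
    · have := List.idxOf_append_cons_le c u p₁ (p₂ ++ [f])
      simp only [List.append_assoc, List.cons_append] at hlt ⊢
      rw [List.idxOf_cons_ne _ huc]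
      omega

theorem FeedDichotomy.append_cons {u : V} {p₁ p₂ : List V} (h : FeedDichotomy A c f p₂)
    (hu : ¬ A f u) (hpre : p₁.countP (A f ·) ≤ p₁.countP (· ∈ Npp A f))
    (hnd : (p₁ ++ [u] ++ (p₂ ++ [f])).Nodup) (hmed : IsMedian A (p₁ ++ [u] ++ (p₂ ++ [f]))) :
    FeedDichotomy A c f (p₁ ++ u :: p₂) := by
  rcases h with h | ⟨s, hs, hmeds, hlt⟩
  · left
    simp only [List.countP_append, List.countP_cons, hu, decide_false, Bool.false_eq_true,
      if_false]
    split_ifs <;> omega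
  · have hcs : c ∈ p₂ ++ [f] :=
      List.idxOf_lt_length_iff.1 (hlt.trans_le (hs.length_eq ▸ List.idxOf_le_length))
    have hcq : c ∉ p₁ ++ [u] := fun hc => List.disjoint_of_nodup_append hnd hc hcs
    refine .inr ⟨p₁ ++ [u] ++ s, by simpa using hs.append_left (p₁ ++ [u]),
      hmed.append_of_perm hs hmeds, ?_⟩
    have hl : p₁ ++ u :: p₂ ++ [f] = p₁ ++ [u] ++ (p₂ ++ [f]) := by simp
    rw [hl, List.idxOf_append_of_notMem hcq, List.idxOf_append_of_notMem hcq]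
    omega

theorem feedDichotomy_of_isMedian (hA : NoDigons A)
    (hstar : ∀ u v, MissingEdge A u v → u = c ∨ v = c) {p : List V}
    (hnd : (p ++ [f]).Nodup) (hmed : IsMedian A (p ++ [f])) : FeedDichotomy A c f p := by
  cases hfind : p.find? (fun w => FarFrom A f w ∧ w ≠ c) with
  | none =>
    refine feedDichotomy_of_forall_farFrom_eq hA hnd hmed fun w hw hfar => ?_
    by_contra hwc
    exact List.find?_eq_none.1 hfind w hw (by simp [hfar, hwc])
  | some u =>
    obtain ⟨hu, p₁, p₂, rfl, hfirst⟩ := List.find?_eq_some_iff_append.1 hfind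
    simp only [decide_eq_true_eq, Bool.not_eq_eq_eq_not, Bool.not_true, decide_eq_false_iff_not,
      not_and, not_not] at hu hfirst
    have hmed' : IsMedian A (p₁ ++ u :: (p₂ ++ [f])) := by simpa using hmed
    have hnd' : (p₁ ++ [u] ++ (p₂ ++ [f])).Nodup := by simpa using hnd
    have hmed'' : IsMedian A (p₁ ++ [u] ++ (p₂ ++ [f])) := by simpa using hmed
    rcases hmed'.countP_out_le_countP_in.eq_or_lt with htight | hlt
    · have hmedU := hmed'.cons_append htight
      have hndT : (p₁ ++ p₂ ++ [f]).Nodup := by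
        simpa using (List.perm_middle.nodup_iff.1 (by simpa using hnd)).of_cons
      exact (feedDichotomy_of_isMedian hA hstar hndT
        (by simpa using hmedU.of_append_right (q := [u]))).insert_middle hu.1.2.1 hu.2 hmedU
    · have hpre := countP_le_countP_npp_of_farFrom hstar (hnd'.of_append_left.of_append_left)
        hu.1 hu.2 hfirst hlt
      exact (feedDichotomy_of_isMedian hA hstar hnd'.of_append_right
        hmed''.of_append_right).append_cons hu.1.2.1 hpre hnd' hmed''
termination_by p.length
decreasing_by all_goals subst_vars; simp only [List.length_append, List.length_cons]; omega

end Dichotomy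

/-- a digraph obtained from a tournament by deleting the edges of
a single star (every missing edge is incident to the center `x`) has a vertex
with the SNP. -/
theorem tournament_minus_star_SNP [Fintype V]
    (A : V → V → Prop) (hA : NoDigons A)
    (x : V) (hStar : ∀ u v, MissingEdge A u v → u = x ∨ v = x) :
    ∃ v : V, SNP A v := by
  obtain ⟨m, hm, hmed, hmax⟩ := exists_isMedian_forall_idxOf_le A Finset.univ.toList x
  have hnd : m.Nodup := hm.nodup_iff.2 (Finset.nodup_toList _)
  have hall : ∀ v, v ∈ m := fun v => hm.mem_iff.2 (by simp)
  obtain ⟨p, f, rfl⟩ := m.eq_nil_or_concat'.resolve_left (List.ne_nil_of_mem (hall x))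
  refine ⟨f, ?_⟩
  rcases feedDichotomy_of_isMedian hA hStar hnd hmed with h | ⟨l, hl, hmedl, hlt⟩
  · exact snp_of_countP_le hA hnd hall h
  · exact absurd (hmax l (hl.trans hm) hmedl) hlt.not_ge
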